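/- Let p be an odd prime with p ≡ 1 (mod 4), and a an integer with (a/p) = 1. Then the number of x ∈ Z/pZ with (x/p) = 1 and ((x+a)/p) = 1 equals (p−1)/4 − 1, while the numbers of x with sign patterns (+,−), (−,+), and (−,−) each equal (p−1)/4. -/

import Mathlib

/-!
Write `χ` for the quadratic character of `𝔽_p`. For `ε, δ = ±1` and `x ∉ {0, -a}` the
product `(1 + ε χ(x)) (1 + δ χ(x + a))` is `4` or `0` according as `(χ(x), χ(x + a)) = (ε, δ)`
or not. Summing over all `x` and correcting for `x = 0` and `x = -a` shows that the number
`N(ε, δ)` of such `x` satisfies `4 N(ε, δ) = p - 2 - ε χ(-a) - δ χ(a) - ε δ`, using `∑ χ(x) = 0`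
and the classical `∑ χ(x) χ(x + a) = -1` (substitute `x = y⁻¹`: the summand becomes
`χ(1 + a y)` for `y ≠ 0`). For `p ≡ 1 mod 4` and `χ(a) = 1` we have `χ(-a) = χ(-1) χ(a) = 1`,
and the four counts follow.
-/

open Finset

section QuadraticCharPairs

variable {F : Type*} [Field F] [Fintype F] [DecidableEq F]

theorem quadraticChar_sum_add (hF : ringChar F ≠ 2) (b : F) :
    ∑ x : F, quadraticChar F (x + b) = 0 :=
  (Equiv.sum_comp (Equiv.addRight b) (quadraticChar F)).trans (quadraticChar_sum_zero hF)

theorem quadraticChar_inv_mul_inv_add {b y : F} (hy : y ≠ 0) :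
    quadraticChar F y⁻¹ * quadraticChar F (y⁻¹ + b) = quadraticChar F (1 + b * y) := by
  have : y⁻¹ * (y⁻¹ + b) = y⁻¹ ^ 2 * (1 + b * y) := by field_simp
  rw [← map_mul, this, map_mul, quadraticChar_sq_one' (inv_ne_zero hy), one_mul]

theorem quadraticChar_sum_mul_add (hF : ringChar F ≠ 2) {b : F} (hb : b ≠ 0) :
    ∑ x : F, quadraticChar F x * quadraticChar F (x + b) = -1 := by
  have hpoint (y : F) : quadraticChar F y⁻¹ * quadraticChar F (y⁻¹ + b)
      = quadraticChar F (1 + b * y) - if y = 0 then 1 else 0 := by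
    rcases eq_or_ne y 0 with rfl | hy
    · simp
    · rw [quadraticChar_inv_mul_inv_add hy, if_neg hy, sub_zero]
  have hshift : ∑ y : F, quadraticChar F (1 + b * y) = 0 :=
    (Equiv.sum_comp ((Equiv.mulLeft₀ b hb).trans (Equiv.addLeft 1)) (quadraticChar F)).trans
      (quadraticChar_sum_zero hF)
  rw [← Equiv.sum_comp (Equiv.inv F)]
  simp only [Equiv.inv_apply, hpoint, Finset.sum_sub_distrib, hshift]
  simp

theorem one_add_mul_eq_ite {ε u : ℤ} (hε : ε = 1 ∨ ε = -1) (hu : u = 1 ∨ u = -1) :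
    1 + ε * u = if u = ε then 2 else 0 := by
  rcases hε with rfl | rfl <;> rcases hu with rfl | rfl <;> norm_num

variable {b : F} {ε δ : ℤ}

theorem one_add_mul_quadraticChar_mul_eq (hb : b ≠ 0) (hε : ε = 1 ∨ ε = -1)
    (hδ : δ = 1 ∨ δ = -1) (x : F) :
    (1 + ε * quadraticChar F x) * (1 + δ * quadraticChar F (x + b)) =
      4 * (if quadraticChar F x = ε ∧ quadraticChar F (x + b) = δ then 1 else 0) +
      (if x = 0 then 1 + δ * quadraticChar F b else 0) +
      (if x = -b then 1 + ε * quadraticChar F (-b) else 0) := by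
  have hε0 : ε ≠ 0 := by omega
  have hδ0 : δ ≠ 0 := by omega
  rcases eq_or_ne x 0 with rfl | hx
  · simp [hb, hε0.symm]
  rcases eq_or_ne x (-b) with rfl | hxb
  · simp [hx, hδ0.symm]
  have hxb' : x + b ≠ 0 := fun h ↦ hxb (eq_neg_of_add_eq_zero_left h)
  rw [one_add_mul_eq_ite hε (quadraticChar_dichotomy hx),
    one_add_mul_eq_ite hδ (quadraticChar_dichotomy hxb'), if_neg hx, if_neg hxb]
  split_ifs <;> simp_all

theorem four_mul_card_quadraticChar_eq (hF : ringChar F ≠ 2) (hb : b ≠ 0)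
    (hε : ε = 1 ∨ ε = -1) (hδ : δ = 1 ∨ δ = -1) :
    4 * (#{x : F | quadraticChar F x = ε ∧ quadraticChar F (x + b) = δ} : ℤ) =
      Fintype.card F - 2 - ε * quadraticChar F (-b) - δ * quadraticChar F b - ε * δ := by
  have hexpand (x : F) : (1 + ε * quadraticChar F x) * (1 + δ * quadraticChar F (x + b)) =
      1 + ε * quadraticChar F x + δ * quadraticChar F (x + b) +
        ε * δ * (quadraticChar F x * quadraticChar F (x + b)) := by ring
  have htotal := Fintype.sum_congr _ _ hexpand
  rw [Fintype.sum_congr _ _ (one_add_mul_quadraticChar_mul_eq hb hε hδ)] at htotal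
  simp only [sum_add_distrib, ← mul_sum, sum_boole, Fintype.sum_ite_eq', sum_const, card_univ,
    nsmul_eq_mul, mul_one, quadraticChar_sum_zero hF, quadraticChar_sum_add hF,
    quadraticChar_sum_mul_add hF hb] at htotal
  linarith

end QuadraticCharPairs

theorem legendreSym_val {p : ℕ} [Fact p.Prime] (x : ZMod p) :
    legendreSym p (x.val : ℤ) = quadraticChar (ZMod p) x := by
  simp [legendreSym]

theorem natCard_legendreSym_pattern {p : ℕ} [Fact p.Prime] (b : ZMod p) {ε δ : ℤ} (hε : ε ≠ 0)
    (hδ : δ ≠ 0) :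
    Nat.card {x : ZMod p // x ≠ 0 ∧ x + b ≠ 0 ∧
        legendreSym p (x.val : ℤ) = ε ∧ legendreSym p ((x + b).val : ℤ) = δ} =
      #{x : ZMod p | quadraticChar (ZMod p) x = ε ∧ quadraticChar (ZMod p) (x + b) = δ} := by
  rw [Nat.card_eq_fintype_card, Fintype.card_subtype]
  congr 1
  ext x
  simp only [legendreSym_val, mem_filter, mem_univ, true_and]
  constructor
  · exact fun h ↦ h.2.2
  · rintro ⟨hx, hxb⟩
    refine ⟨?_, ?_, hx, hxb⟩ <;> rintro h
    · simp [h, hε.symm] at hx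
    · simp [h, hδ.symm] at hxb

theorem legendre_pair_count_one_mod_four_general (p : ℕ) [Fact p.Prime]
    (hp4 : p % 4 = 1) (a : ℤ) (ha : legendreSym p a = 1) :
    Nat.card {x : ZMod p // x ≠ 0 ∧ x + (a : ZMod p) ≠ 0 ∧
        legendreSym p (x.val : ℤ) = 1 ∧
        legendreSym p ((x + (a : ZMod p)).val : ℤ) = 1} = (p - 1) / 4 - 1 ∧
    Nat.card {x : ZMod p // x ≠ 0 ∧ x + (a : ZMod p) ≠ 0 ∧
        legendreSym p (x.val : ℤ) = 1 ∧
        legendreSym p ((x + (a : ZMod p)).val : ℤ) = -1} = (p - 1) / 4 ∧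
    Nat.card {x : ZMod p // x ≠ 0 ∧ x + (a : ZMod p) ≠ 0 ∧
        legendreSym p (x.val : ℤ) = -1 ∧
        legendreSym p ((x + (a : ZMod p)).val : ℤ) = 1} = (p - 1) / 4 ∧
    Nat.card {x : ZMod p // x ≠ 0 ∧ x + (a : ZMod p) ≠ 0 ∧
        legendreSym p (x.val : ℤ) = -1 ∧
        legendreSym p ((x + (a : ZMod p)).val : ℤ) = -1} = (p - 1) / 4 := by
  have hp2 : p ≠ 2 := by rintro rfl; norm_num at hp4
  have hF : ringChar (ZMod p) ≠ 2 := by rwa [ZMod.ringChar_zmod_n]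
  have ha0 : (a : ZMod p) ≠ 0 := fun h ↦ by simp [(legendreSym.eq_zero_iff p a).2 h] at ha
  have hχa : quadraticChar (ZMod p) a = 1 := ha
  have hχna : quadraticChar (ZMod p) (-a) = 1 := by
    have h := legendreSym.at_neg hp2 a
    rw [ZMod.χ₄_nat_one_mod_four hp4, ha, one_mul] at h
    simpa [legendreSym] using h
  have hcount {ε δ : ℤ} (hε : ε = 1 ∨ ε = -1) (hδ : δ = 1 ∨ δ = -1) :
      4 * (Nat.card {x : ZMod p // x ≠ 0 ∧ x + (a : ZMod p) ≠ 0 ∧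
        legendreSym p (x.val : ℤ) = ε ∧ legendreSym p ((x + (a : ZMod p)).val : ℤ) = δ} : ℤ) =
        p - 2 - ε - δ - ε * δ := by
    rw [natCard_legendreSym_pattern _ (by omega) (by omega),
      four_mul_card_quadraticChar_eq hF ha0 hε hδ, ZMod.card, hχa, hχna]
    ring
  have h₁ := hcount (.inl rfl) (.inl rfl)
  have h₂ := hcount (.inl rfl) (.inr rfl)
  have h₃ := hcount (.inr rfl) (.inl rfl)
  have h₄ := hcount (.inr rfl) (.inr rfl)
  omega

/-- for p ≡ 1 (mod 4) and (a/p) = 1, the counts of the four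
Legendre sign patterns for (x, x + a). -/
theorem legendre_pair_count_one_mod_four (p : ℕ) [Fact p.Prime] (hodd : Odd p)
    (hp4 : p % 4 = 1) (a : ℤ) (ha : legendreSym p a = 1) :
    Nat.card {x : ZMod p // x ≠ 0 ∧ x + (a : ZMod p) ≠ 0 ∧
        legendreSym p (x.val : ℤ) = 1 ∧
        legendreSym p ((x + (a : ZMod p)).val : ℤ) = 1} = (p - 1) / 4 - 1 ∧
    Nat.card {x : ZMod p // x ≠ 0 ∧ x + (a : ZMod p) ≠ 0 ∧
        legendreSym p (x.val : ℤ) = 1 ∧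
        legendreSym p ((x + (a : ZMod p)).val : ℤ) = -1} = (p - 1) / 4 ∧
    Nat.card {x : ZMod p // x ≠ 0 ∧ x + (a : ZMod p) ≠ 0 ∧
        legendreSym p (x.val : ℤ) = -1 ∧
        legendreSym p ((x + (a : ZMod p)).val : ℤ) = 1} = (p - 1) / 4 ∧
    Nat.card {x : ZMod p // x ≠ 0 ∧ x + (a : ZMod p) ≠ 0 ∧
        legendreSym p (x.val : ℤ) = -1 ∧
        legendreSym p ((x + (a : ZMod p)).val : ℤ) = -1} = (p - 1) / 4 :=
  legendre_pair_count_one_mod_four_general p hp4 a ha
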